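/- arXiv:2505.00420 — 6 statements merged into one kernel-verified Lean document; each statement's English description precedes it below -/
import Mathlib

section
/- Let X be a metric space and for each τ ∈ (0,1] let L(τ) > 0. Suppose u₁, u₂ : [0,1] → X satisfy: (i) d(u₁(τ), u₁(0)) ≤ C τ^α and d(u₂(τ), u₂(0)) ≤ C τ^α for all τ ∈ (0,1], where u₁(0) = u₂(0); (ii) for all 0 < τ ≤ t ≤ 1, d(u₁(t), u₂(t)) ≤ L(τ) · d(u₁(τ), u₂(τ)); (iii) lim_{τ→0⁺} τ^α L(τ) = 0. Then u₁(t) = u₂(t) for every t ∈ (0,1]. -/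
/-- Uniqueness from fast decay + blowing-up Lipschitz constant. -/
theorem stmt0 {X : Type*} [MetricSpace X] (α C : ℝ) (hα : 0 < α) (hα1 : α < 1) (hC : 0 < C)
    (L : ℝ → ℝ) (hLpos : ∀ τ ∈ Set.Ioc (0:ℝ) 1, 0 < L τ)
    (u₁ u₂ : ℝ → X)
    (h0 : u₁ 0 = u₂ 0)
    (h1 : ∀ τ ∈ Set.Ioc (0:ℝ) 1, dist (u₁ τ) (u₁ 0) ≤ C * τ ^ α)
    (h2 : ∀ τ ∈ Set.Ioc (0:ℝ) 1, dist (u₂ τ) (u₂ 0) ≤ C * τ ^ α)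
    (h3 : ∀ τ t : ℝ, 0 < τ → τ ≤ t → t ≤ 1 →
      dist (u₁ t) (u₂ t) ≤ L τ * dist (u₁ τ) (u₂ τ))
    (h4 : Filter.Tendsto (fun τ : ℝ => τ ^ α * L τ) (nhdsWithin 0 (Set.Ioi 0)) (nhds 0)) :
    ∀ t ∈ Set.Ioc (0:ℝ) 1, u₁ t = u₂ t := by
  intro t ht
  obtain ⟨ht0, ht1⟩ := ht
  have key : ∀ᶠ τ in nhdsWithin (0:ℝ) (Set.Ioi 0),
      dist (u₁ t) (u₂ t) ≤ 2 * C * (τ ^ α * L τ) := by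
    filter_upwards [Ioo_mem_nhdsGT_of_mem (by constructor <;> simp [ht0] : (0:ℝ) ∈ Set.Ico 0 t)]
      with τ hτ
    obtain ⟨hτ0, hτt⟩ := hτ
    have hτ1 : τ ∈ Set.Ioc (0:ℝ) 1 := ⟨hτ0, le_trans hτt.le ht1⟩
    have hd : dist (u₁ τ) (u₂ τ) ≤ 2 * C * τ ^ α := by
      calc dist (u₁ τ) (u₂ τ) ≤ dist (u₁ τ) (u₁ 0) + dist (u₂ τ) (u₂ 0) := by
            rw [h0]; exact dist_triangle_right _ _ _
        _ ≤ C * τ ^ α + C * τ ^ α := add_le_add (h1 τ hτ1) (h2 τ hτ1)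
        _ = 2 * C * τ ^ α := by ring
    calc dist (u₁ t) (u₂ t) ≤ L τ * dist (u₁ τ) (u₂ τ) := h3 τ t hτ0 hτt.le ht1
      _ ≤ L τ * (2 * C * τ ^ α) :=
          mul_le_mul_of_nonneg_left hd (hLpos τ hτ1).le
      _ = 2 * C * (τ ^ α * L τ) := by ring
  have hlim : Filter.Tendsto (fun τ : ℝ => 2 * C * (τ ^ α * L τ))
      (nhdsWithin 0 (Set.Ioi 0)) (nhds 0) := by
    simpa using h4.const_mul (2 * C)
  have hd0 : dist (u₁ t) (u₂ t) ≤ 0 :=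
    ge_of_tendsto hlim key
  exact eq_of_dist_eq_zero (le_antisymm hd0 dist_nonneg)
end

section
/- Let X be a metric space, α ∈ (0,1), 0 < β < α, and constants L* ≥ 1, C > 0. Suppose u₁, u₂ : [0,1] → X satisfy d(uᵢ(τ), uᵢ(0)) ≤ C τ^α for all τ ∈ (0,1] and i = 1,2, and d(u₁(t), u₂(t)) ≤ 2L* τ^{−β} (d(u₁(τ), u₂(τ))) for all 0 < τ ≤ t ≤ 1. Set D = d(u₁(0), u₂(0)) and assume 0 < D ≤ 1. Then for every t ∈ [0,1], d(u₁(t), u₂(t)) ≤ 2L*(1 + 2C) · D^{1 − β/α}. -/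
/-- Hölder continuous dependence on the initial data. -/
theorem stmt1 {X : Type*} [MetricSpace X] (α β C Ls : ℝ)
    (hα : 0 < α) (hα1 : α < 1) (hβ : 0 < β) (hβα : β < α) (hC : 0 < C) (hLs : 1 ≤ Ls)
    (u₁ u₂ : ℝ → X)
    (h1 : ∀ τ ∈ Set.Ioc (0:ℝ) 1, dist (u₁ τ) (u₁ 0) ≤ C * τ ^ α)
    (h2 : ∀ τ ∈ Set.Ioc (0:ℝ) 1, dist (u₂ τ) (u₂ 0) ≤ C * τ ^ α)
    (h3 : ∀ τ t : ℝ, 0 < τ → τ ≤ t → t ≤ 1 →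
      dist (u₁ t) (u₂ t) ≤ 2 * Ls * τ ^ (-β) * dist (u₁ τ) (u₂ τ))
    (hD : 0 < dist (u₁ 0) (u₂ 0)) (hD1 : dist (u₁ 0) (u₂ 0) ≤ 1) :
    ∀ t ∈ Set.Icc (0:ℝ) 1,
      dist (u₁ t) (u₂ t) ≤ 2 * Ls * (1 + 2*C) * (dist (u₁ 0) (u₂ 0)) ^ (1 - β/α) := by
  intro t ht
  set D := dist (u₁ 0) (u₂ 0) with hDdef
  set τ₀ : ℝ := D ^ (1/α) with hτ₀def
  have hτ₀pos : 0 < τ₀ := Real.rpow_pos_of_pos hD _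
  have hτ₀le1 : τ₀ ≤ 1 := Real.rpow_le_one (le_of_lt hD) hD1 (by positivity)
  have hτ₀α : τ₀ ^ α = D := by
    rw [hτ₀def, ← Real.rpow_mul (le_of_lt hD), one_div,
      inv_mul_cancel₀ (ne_of_gt hα), Real.rpow_one]
  have hτ₀α' : τ₀ ^ α = D := hτ₀α
  have hDexp : D ≤ D ^ (1 - β/α) := by
    nth_rewrite 1 [← Real.rpow_one D]
    apply Real.rpow_le_rpow_of_exponent_ge hD hD1
    have : β / α ≤ 1 := (div_le_one hα).mpr (le_of_lt hβα)
    linarith [div_pos hβ hα]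
  have hexp_pos : 0 < 1 - β/α := by
    have : β / α < 1 := (div_lt_one hα).mpr hβα
    linarith
  have hcoef : (1:ℝ) ≤ 2 * Ls * (1 + 2*C) := by nlinarith
  -- key estimate: for 0 < s ≤ τ₀ (and s ≤ 1), dist (u₁ s) (u₂ s) ≤ (1+2C) * D
  have key : ∀ s : ℝ, 0 < s → s ≤ τ₀ → dist (u₁ s) (u₂ s) ≤ (1 + 2*C) * D := by
    intro s hs hsτ
    have hs1 : s ≤ 1 := hsτ.trans hτ₀le1
    have hsmem : s ∈ Set.Ioc (0:ℝ) 1 := ⟨hs, hs1⟩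
    have hsα : s ^ α ≤ D := by
      rw [← hτ₀α]
      exact Real.rpow_le_rpow (le_of_lt hs) hsτ (le_of_lt hα)
    have tri : dist (u₁ s) (u₂ s) ≤ dist (u₁ s) (u₁ 0) + D + dist (u₂ s) (u₂ 0) := by
      rw [hDdef]
      have := dist_triangle4 (u₁ s) (u₁ 0) (u₂ 0) (u₂ s)
      rw [dist_comm (u₂ 0) (u₂ s)] at this
      linarith
    have := h1 s hsmem
    have := h2 s hsmem
    nlinarith
  rcases eq_or_lt_of_le ht.1 with h0 | h0
  · -- t = 0
    rw [← h0]
    calc D ≤ D ^ (1 - β/α) := hDexp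
      _ ≤ 2 * Ls * (1 + 2*C) * D ^ (1 - β/α) := by
          nth_rewrite 1 [← one_mul (D ^ (1 - β/α))]
          exact mul_le_mul_of_nonneg_right hcoef (by positivity)
  rcases le_or_gt t τ₀ with hcase | hcase
  · -- small t
    calc dist (u₁ t) (u₂ t) ≤ (1 + 2*C) * D := key t h0 hcase
      _ ≤ (1 + 2*C) * D ^ (1 - β/α) := by
          exact mul_le_mul_of_nonneg_left hDexp (by positivity)
      _ ≤ 2 * Ls * (1 + 2*C) * D ^ (1 - β/α) := by
          have h2Ls : (1 + 2*C) ≤ 2 * Ls * (1 + 2*C) := by nlinarith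
          exact mul_le_mul_of_nonneg_right h2Ls (by positivity)
  · -- t ≥ τ₀
    have h3' := h3 τ₀ t hτ₀pos (le_of_lt hcase) ht.2
    have hkey := key τ₀ hτ₀pos le_rfl
    have hτβ : τ₀ ^ (-β) = D ^ (-(β/α)) := by
      rw [hτ₀def, ← Real.rpow_mul (le_of_lt hD)]
      ring_nf
    have hpow : D ^ (-(β/α)) * D = D ^ (1 - β/α) := by
      nth_rewrite 2 [← Real.rpow_one D]
      rw [← Real.rpow_add hD]
      ring_nf
    have hτβpos : 0 < τ₀ ^ (-β) := Real.rpow_pos_of_pos hτ₀pos _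
    calc dist (u₁ t) (u₂ t) ≤ 2 * Ls * τ₀ ^ (-β) * dist (u₁ τ₀) (u₂ τ₀) := h3'
      _ ≤ 2 * Ls * τ₀ ^ (-β) * ((1 + 2*C) * D) := by
          apply mul_le_mul_of_nonneg_left hkey
          positivity
      _ = 2 * Ls * (1 + 2*C) * (D ^ (-(β/α)) * D) := by rw [hτβ]; ring
      _ = 2 * Ls * (1 + 2*C) * D ^ (1 - β/α) := by rw [hpow]
end

section
/- Let σ', σ'' be nonzero reals with the same sign, ξ', ξ'' ∈ ℝ, and λ', λ'', λ₁ ∈ ℝ with |λ' − λ''| ≥ c₀(|σ'| + |σ''|) for some c₀ > 0, and |λ₁ − (σ'λ' + σ''λ'')/(σ' + σ'')| ≤ M|σ'σ''| for some M > 0. Then the quantity ξ₁ = (ξ'(λ'' − λ₁) − ξ''(λ' − λ₁))/(λ'' − λ') satisfies |ξ₁ − (ξ'σ' + ξ''σ'')/(σ' + σ'')| ≤ (M/c₀) (|ξ'| + |ξ''|) |σ'σ''|/(|σ'| + |σ''|). -/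
/-- Shift estimate for an interaction of two fronts of the same family. -/
theorem stmt8 (σ' σ'' ξ' ξ'' lam' lam'' lam₁ c₀ M : ℝ)
    (hsign : 0 < σ' * σ'') (hc₀ : 0 < c₀) (hM : 0 < M)
    (hsep : c₀ * (|σ'| + |σ''|) ≤ |lam' - lam''|)
    (havg : |lam₁ - (σ' * lam' + σ'' * lam'')/(σ' + σ'')| ≤ M * |σ' * σ''|) :
    |(ξ' * (lam'' - lam₁) - ξ'' * (lam' - lam₁))/(lam'' - lam')
        - (ξ' * σ' + ξ'' * σ'')/(σ' + σ'')|
      ≤ (M/c₀) * (|ξ'| + |ξ''|) * |σ' * σ''| / (|σ'| + |σ''|) := by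
  have hσ' : σ' ≠ 0 := by rintro rfl; simp at hsign
  have hσ'' : σ'' ≠ 0 := by rintro rfl; simp at hsign
  have hs : σ' + σ'' ≠ 0 := by
    intro h
    have h' : σ'' = -σ' := by linarith
    rw [h'] at hsign; nlinarith [sq_nonneg σ']
  have hP : 0 < |σ'| + |σ''| := by positivity
  have hd : lam'' - lam' ≠ 0 := by
    intro h
    have h2 : lam' - lam'' = 0 := by linarith
    rw [h2, abs_zero] at hsep
    nlinarith
  have key : (ξ' * (lam'' - lam₁) - ξ'' * (lam' - lam₁))/(lam'' - lam')
        - (ξ' * σ' + ξ'' * σ'')/(σ' + σ'')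
      = (lam₁ - (σ' * lam' + σ'' * lam'')/(σ' + σ'')) * (ξ'' - ξ') / (lam'' - lam') := by
    field_simp
    ring
  rw [key, abs_div, abs_mul]
  have hsep' : c₀ * (|σ'| + |σ''|) ≤ |lam'' - lam'| := by
    rw [show lam'' - lam' = -(lam' - lam'') by ring, abs_neg]; exact hsep
  have h1 : |lam₁ - (σ' * lam' + σ'' * lam'')/(σ' + σ'')| * |ξ'' - ξ'|
      ≤ (M * |σ' * σ''|) * (|ξ'| + |ξ''|) := by
    apply mul_le_mul havg _ (abs_nonneg _) (by positivity)
    calc |ξ'' - ξ'| ≤ |ξ''| + |ξ'| := abs_sub _ _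
      _ = |ξ'| + |ξ''| := by ring
  have h2 : |lam₁ - (σ' * lam' + σ'' * lam'')/(σ' + σ'')| * |ξ'' - ξ'| / |lam'' - lam'|
      ≤ (M * |σ' * σ''|) * (|ξ'| + |ξ''|) / (c₀ * (|σ'| + |σ''|)) := by
    apply div_le_div₀ (by positivity) h1 (by positivity) hsep'
  calc _ ≤ (M * |σ' * σ''|) * (|ξ'| + |ξ''|) / (c₀ * (|σ'| + |σ''|)) := h2
    _ = (M/c₀) * (|ξ'| + |ξ''|) * |σ' * σ''| / (|σ'| + |σ''|) := by
        field_simp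
end

section
/- Let φ : ℝ² × ℝ → ℝ be a C¹ function with |φ| ≤ M and Lipschitz constant M on a neighborhood of the origin. For states w̄ near the origin and s small, define the curve S(w̄, s) = (w̄₁ + s, w̄₂ + φ(w̄, s)s³). Let σ', σ'' be small, set w' = S(w̄, σ') and w* = S(w', σ''), and w♯ = S(w̄, σ' + σ''). Then |w♯ − w*| ≤ C(|σ'|²|σ''| + |σ'||σ''|²) for a constant C depending only on M. -/
/-- Glimm interaction estimate for two shocks of the same family. -/
theorem stmt9 (M : ℝ) (hM : 0 < M) :
    ∃ C : ℝ, 0 < C ∧ ∀ φ : (ℝ × ℝ) × ℝ → ℝ,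
      (∀ p, |φ p| ≤ M) → LipschitzWith (Real.toNNReal M) φ →
      ∀ S : (ℝ × ℝ) → ℝ → ℝ × ℝ,
        (∀ w s, S w s = (w.1 + s, w.2 + φ (w, s) * s^3)) →
      ∀ (wb : ℝ × ℝ) (σ' σ'' : ℝ), |σ'| ≤ 1 → |σ''| ≤ 1 →
        ‖S wb (σ' + σ'') - S (S wb σ') σ''‖
          ≤ C * (|σ'|^2 * |σ''| + |σ'| * |σ''|^2) := by
  refine ⟨M * (M + 5), by positivity, ?_⟩
  intro φ hφ hLip S hS wb σ' σ'' h1 h2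
  have hMc : (Real.toNNReal M : ℝ) = M := Real.coe_toNNReal M hM.le
  set a := |σ'| with ha'
  set b := |σ''| with hb'
  have ha0 : 0 ≤ a := abs_nonneg _
  have hb0 : 0 ≤ b := abs_nonneg _
  have ha3 : a ^ 3 ≤ a := by
    nlinarith [mul_nonneg (mul_nonneg ha0 (sub_nonneg.2 h1)) (by linarith : (0:ℝ) ≤ 1 + a)]
  set A := φ (wb, σ' + σ'') with hA'
  set B := φ (wb, σ') with hB'
  set w' : ℝ × ℝ := (wb.1 + σ', wb.2 + B * σ' ^ 3) with hw'
  set D := φ (w', σ'') with hD'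
  have hSw' : S wb σ' = w' := by rw [hS]
  have hAb : |A| ≤ M := hφ _
  have hBb : |B| ≤ M := hφ _
  have hAB : |A - B| ≤ M * b := by
    have h := hLip.dist_le_mul (wb, σ' + σ'') (wb, σ')
    rw [hMc] at h
    simpa [Real.dist_eq, Prod.dist_eq, abs_nonneg] using h
  have hAD : |A - D| ≤ M * ((1 + M) * a) := by
    have h := hLip.dist_le_mul (wb, σ' + σ'') (w', σ'')
    rw [hMc] at h
    have hd : dist ((wb, σ' + σ'') : (ℝ × ℝ) × ℝ) (w', σ'') ≤ (1 + M) * a := by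
      have hB3 : |B * σ' ^ 3| ≤ M * a := by
        rw [abs_mul, abs_pow]
        calc |B| * a ^ 3 ≤ M * a ^ 3 :=
              mul_le_mul_of_nonneg_right hBb (by positivity)
          _ ≤ M * a := mul_le_mul_of_nonneg_left ha3 hM.le
      rw [Prod.dist_eq, Prod.dist_eq]
      simp only [hw', Real.dist_eq]
      have e1 : wb.1 - (wb.1 + σ') = -σ' := by ring
      have e2 : wb.2 - (wb.2 + B * σ' ^ 3) = -(B * σ' ^ 3) := by ring
      have e3 : σ' + σ'' - σ'' = σ' := by ring
      rw [e1, e2, e3, abs_neg, abs_neg]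
      have h4 : a ≤ (1 + M) * a := by nlinarith [mul_nonneg hM.le ha0]
      have h5 : |B * σ' ^ 3| ≤ (1 + M) * a := by
        refine hB3.trans ?_
        nlinarith [mul_nonneg hM.le ha0]
      exact max_le (max_le h4 h5) h4
    calc |A - D| = dist A D := (Real.dist_eq A D).symm
      _ ≤ M * dist ((wb, σ' + σ'') : (ℝ × ℝ) × ℝ) (w', σ'') := h
      _ ≤ M * ((1 + M) * a) := mul_le_mul_of_nonneg_left hd hM.le
  rw [hSw', hS, hS]
  set E := wb.2 + A * (σ' + σ'') ^ 3 - (w'.2 + D * σ'' ^ 3) with hE'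
  have hnorm : ‖((wb.1 + (σ' + σ''), wb.2 + A * (σ' + σ'') ^ 3) : ℝ × ℝ)
      - (w'.1 + σ'', w'.2 + D * σ'' ^ 3)‖ = |E| := by
    have e1 : wb.1 + (σ' + σ'') - (w'.1 + σ'') = 0 := by
      simp only [hw']; ring
    simp [Prod.norm_def, Prod.sub_def, e1, Real.norm_eq_abs, abs_nonneg, hE']
  rw [hnorm]
  have hEeq : E = A * (3 * σ' * σ'' * (σ' + σ'')) + ((A - B) * σ' ^ 3 + (A - D) * σ'' ^ 3) := by
    simp only [hE', hw']; ring
  have key : |E| ≤ |A| * (3 * a * b * (a + b)) + (|A - B| * a ^ 3 + |A - D| * b ^ 3) := by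
    rw [hEeq]
    refine le_trans (abs_add_le _ _) ?_
    gcongr
    · calc |A * (3 * σ' * σ'' * (σ' + σ''))| = |A| * (3 * a * b * |σ' + σ''|) := by
            rw [abs_mul, abs_mul, abs_mul, abs_mul]
            simp [abs_of_nonneg, ha', hb']
        _ ≤ |A| * (3 * a * b * (a + b)) := by
            gcongr
            exact abs_add_le σ' σ''
    · refine le_trans (abs_add_le _ _) ?_
      rw [abs_mul, abs_mul, abs_pow, abs_pow]
  -- now pure arithmetic
  have hA3 : |A| * (3 * a * b * (a + b)) ≤ M * (3 * a * b * (a + b)) :=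
    mul_le_mul_of_nonneg_right hAb (by positivity)
  have hAB' : |A - B| * a ^ 3 ≤ M * (a ^ 2 * b) := by
    calc |A - B| * a ^ 3 ≤ M * b * a ^ 3 :=
          mul_le_mul_of_nonneg_right hAB (by positivity)
      _ = M * b * a ^ 2 * a := by ring
      _ ≤ M * b * a ^ 2 * 1 := by gcongr
      _ = M * (a ^ 2 * b) := by ring
  have hAD' : |A - D| * b ^ 3 ≤ M * (1 + M) * (a * b ^ 2) := by
    calc |A - D| * b ^ 3 ≤ M * ((1 + M) * a) * b ^ 3 :=
          mul_le_mul_of_nonneg_right hAD (by positivity)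
      _ = M * (1 + M) * (a * b ^ 2) * b := by ring
      _ ≤ M * (1 + M) * (a * b ^ 2) * 1 := by gcongr
      _ = M * (1 + M) * (a * b ^ 2) := by ring
  have final : M * (3 * a * b * (a + b)) + (M * (a ^ 2 * b) + M * (1 + M) * (a * b ^ 2))
      ≤ M * (M + 5) * (a ^ 2 * b + a * b ^ 2) := by
    nlinarith [mul_nonneg (mul_nonneg hM.le hM.le) (mul_nonneg (mul_nonneg ha0 ha0) hb0),
      mul_nonneg hM.le (mul_nonneg (mul_nonneg ha0 ha0) hb0),
      mul_nonneg hM.le (mul_nonneg (mul_nonneg ha0 hb0) hb0)]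
  linarith [key, hA3, hAB', hAD', final]
end

section
/- Let φ, ψ : ℝ² × ℝ → ℝ be C¹ with |φ|, |ψ| ≤ M and Lipschitz constant M near the origin. Define S₁(s, w) = (w₁ + s, w₂ + φ(s,w)s³) and S₂(s, w) = (w₁ + ψ(s,w)s³, w₂ + s). Given a state w̄ and small σ', σ'', set w* = S₁(σ', S₂(σ'', w̄)) and w♯ = S₂(σ'', S₁(σ', w̄)). Then |w♯ − w*| ≤ C(|σ'| |σ''|³ + |σ''| |σ'|³) for a constant C depending only on M. -/
lemma lipkey (M : ℝ) (hM : 0 < M) (f : ℝ × (ℝ × ℝ) → ℝ)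
    (hL : LipschitzWith (Real.toNNReal M) f) (s : ℝ) (x y : ℝ × ℝ) :
    |f (s, x) - f (s, y)| ≤ M * dist x y := by
  have := hL.dist_le_mul (s, x) (s, y)
  rw [Real.dist_eq] at this
  have h1 : dist ((s, x) : ℝ × (ℝ × ℝ)) (s, y) = dist x y := by
    simp only [Prod.dist_eq, dist_self]
    exact max_eq_right (le_max_of_le_left dist_nonneg)
  rw [h1, Real.coe_toNNReal M hM.le] at this
  exact this

/-- Commutator estimate for the interaction of two shocks of different families. -/
theorem stmt10 (M : ℝ) (hM : 0 < M) :
    ∃ C : ℝ, 0 < C ∧ ∀ φ ψ : ℝ × (ℝ × ℝ) → ℝ,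
      (∀ p, |φ p| ≤ M) → (∀ p, |ψ p| ≤ M) →
      LipschitzWith (Real.toNNReal M) φ → LipschitzWith (Real.toNNReal M) ψ →
      ∀ S₁ S₂ : ℝ → (ℝ × ℝ) → ℝ × ℝ,
        (∀ s w, S₁ s w = (w.1 + s, w.2 + φ (s, w) * s^3)) →
        (∀ s w, S₂ s w = (w.1 + ψ (s, w) * s^3, w.2 + s)) →
      ∀ (wb : ℝ × ℝ) (σ' σ'' : ℝ), |σ'| ≤ 1 → |σ''| ≤ 1 →
        ‖S₂ σ'' (S₁ σ' wb) - S₁ σ' (S₂ σ'' wb)‖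
          ≤ C * (|σ'| * |σ''|^3 + |σ''| * |σ'|^3) := by
  refine ⟨M * max 1 M, by positivity, ?_⟩
  intro φ ψ hφ hψ hLφ hLψ S₁ S₂ hS₁ hS₂ wb σ' σ'' h1 h2
  set C := M * max 1 M with hC
  -- distances of shifted points
  have hd1 : dist (S₁ σ' wb) wb ≤ max 1 M * |σ'| := by
    rw [hS₁, Prod.dist_eq]
    apply max_le
    · rw [Real.dist_eq]
      have : wb.1 + σ' - wb.1 = σ' := by ring
      rw [this]
      calc |σ'| = 1 * |σ'| := by ring
        _ ≤ max 1 M * |σ'| := by gcongr; exact le_max_left _ _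
    · rw [Real.dist_eq]
      have : wb.2 + φ (σ', wb) * σ' ^ 3 - wb.2 = φ (σ', wb) * σ' ^ 3 := by ring
      rw [this, abs_mul, abs_pow]
      have h3 : |σ'| ^ 3 ≤ |σ'| := pow_le_of_le_one (abs_nonneg _) h1 (by norm_num)
      calc |φ (σ', wb)| * |σ'| ^ 3 ≤ M * |σ'| :=
            mul_le_mul (hφ _) h3 (by positivity) hM.le
        _ ≤ max 1 M * |σ'| := by gcongr; exact le_max_right _ _
  have hd2 : dist (S₂ σ'' wb) wb ≤ max 1 M * |σ''| := by
    rw [hS₂, Prod.dist_eq]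
    apply max_le
    · rw [Real.dist_eq]
      have : wb.1 + ψ (σ'', wb) * σ'' ^ 3 - wb.1 = ψ (σ'', wb) * σ'' ^ 3 := by ring
      rw [this, abs_mul, abs_pow]
      have h3 : |σ''| ^ 3 ≤ |σ''| := pow_le_of_le_one (abs_nonneg _) h2 (by norm_num)
      calc |ψ (σ'', wb)| * |σ''| ^ 3 ≤ M * |σ''| :=
            mul_le_mul (hψ _) h3 (by positivity) hM.le
        _ ≤ max 1 M * |σ''| := by gcongr; exact le_max_right _ _
    · rw [Real.dist_eq]
      have : wb.2 + σ'' - wb.2 = σ'' := by ring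
      rw [this]
      calc |σ''| = 1 * |σ''| := by ring
        _ ≤ max 1 M * |σ''| := by gcongr; exact le_max_left _ _
  have key1 : |ψ (σ'', S₁ σ' wb) - ψ (σ'', wb)| ≤ C * |σ'| :=
    (lipkey M hM ψ hLψ σ'' _ _).trans (by rw [hC, mul_assoc]; exact mul_le_mul_of_nonneg_left hd1 hM.le)
  have key2 : |φ (σ', S₂ σ'' wb) - φ (σ', wb)| ≤ C * |σ''| :=
    (lipkey M hM φ hLφ σ' _ _).trans (by rw [hC, mul_assoc]; exact mul_le_mul_of_nonneg_left hd2 hM.le)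
  have hnn : 0 ≤ C * (|σ'| * |σ''| ^ 3) ∧ 0 ≤ C * (|σ''| * |σ'| ^ 3) := by
    constructor <;> positivity
  rw [Prod.norm_def]
  apply max_le
  · -- first component
    have e1 : (S₂ σ'' (S₁ σ' wb) - S₁ σ' (S₂ σ'' wb)).1
        = (ψ (σ'', S₁ σ' wb) - ψ (σ'', wb)) * σ'' ^ 3 := by
      simp only [hS₁, hS₂, Prod.sub_def]
      ring
    rw [Real.norm_eq_abs, e1, abs_mul, abs_pow]
    calc |ψ (σ'', S₁ σ' wb) - ψ (σ'', wb)| * |σ''| ^ 3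
        ≤ C * |σ'| * |σ''| ^ 3 := by gcongr
      _ ≤ C * (|σ'| * |σ''| ^ 3 + |σ''| * |σ'| ^ 3) := by nlinarith [hnn.1, hnn.2]
  · have e2 : (S₂ σ'' (S₁ σ' wb) - S₁ σ' (S₂ σ'' wb)).2
        = (φ (σ', wb) - φ (σ', S₂ σ'' wb)) * σ' ^ 3 := by
      simp only [hS₁, hS₂, Prod.sub_def]
      ring
    rw [Real.norm_eq_abs, e2, abs_mul, abs_pow]
    rw [abs_sub_comm] at key2
    calc |φ (σ', wb) - φ (σ', S₂ σ'' wb)| * |σ'| ^ 3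
        ≤ C * |σ''| * |σ'| ^ 3 := by gcongr
      _ ≤ C * (|σ'| * |σ''| ^ 3 + |σ''| * |σ'| ^ 3) := by nlinarith [hnn.1, hnn.2]
end

section
/- For each point u, let r₁(u), r₂(u) be a basis of ℝ² with dual basis ℓ₁(u), ℓ₂(u), and fix points u⁻, u⁺. Suppose Δf₁, Δf₂, Δf₃ ∈ ℝ², v₀, v ∈ ℝ², and scalars ξ₀, ξ₂ satisfy Δf₁ − Δf₂ = v ξ₂ and Δf₃ = v₀ ξ₀ + Δf₂, with Δf₁ parallel to r₁(u⁻), Δf₂ parallel to r₁(u⁺), and Δf₃ parallel to r₂(u⁺). If ℓ₂(u⁻) · v ≠ 0, then ξ₂ = [ (ℓ₂(u⁻) · r₁(u⁺)) (ℓ₁(u⁺) · v₀) / (ℓ₂(u⁻) · v) ] ξ₀. -/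
/-- The planar dot product. -/
def dot (a b : ℝ × ℝ) : ℝ := a.1 * b.1 + a.2 * b.2

/-- Exact shift ξ₂ of a 2-front behind the shifted front (Case 2 for Temple systems). -/
theorem stmt12 (r₁m r₂m l₁m l₂m r₁p r₂p l₁p l₂p : ℝ × ℝ)
    (Δf₁ Δf₂ Δf₃ v₀ v : ℝ × ℝ) (ξ₀ ξ₂ : ℝ)
    (hm11 : dot l₁m r₁m = 1) (hm12 : dot l₁m r₂m = 0)
    (hm21 : dot l₂m r₁m = 0) (hm22 : dot l₂m r₂m = 1)
    (hp11 : dot l₁p r₁p = 1) (hp12 : dot l₁p r₂p = 0)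
    (hp21 : dot l₂p r₁p = 0) (hp22 : dot l₂p r₂p = 1)
    (hcons1 : Δf₁ - Δf₂ = ξ₂ • v)
    (hcons2 : Δf₃ = ξ₀ • v₀ + Δf₂)
    (hpar1 : ∃ c : ℝ, Δf₁ = c • r₁m)
    (hpar2 : ∃ c : ℝ, Δf₂ = c • r₁p)
    (hpar3 : ∃ c : ℝ, Δf₃ = c • r₂p)
    (hne : dot l₂m v ≠ 0) :
    ξ₂ = (dot l₂m r₁p * dot l₁p v₀ / dot l₂m v) * ξ₀ := by
  obtain ⟨a, ha⟩ := hpar1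
  obtain ⟨b, hb⟩ := hpar2
  obtain ⟨c, hc⟩ := hpar3
  subst ha hb hc
  have h1 := congrArg Prod.fst hcons1
  have h2 := congrArg Prod.snd hcons1
  have h3 := congrArg Prod.fst hcons2
  have h4 := congrArg Prod.snd hcons2
  simp only [Prod.fst_sub, Prod.snd_sub, Prod.smul_fst, Prod.smul_snd, Prod.fst_add,
    Prod.snd_add, smul_eq_mul] at h1 h2 h3 h4
  simp only [dot] at *
  field_simp
  linear_combination -(l₂m.1 * h1) - l₂m.2 * h2 + a * hm21 +
    (l₂m.1 * r₁p.1 + l₂m.2 * r₁p.2) * (l₁p.1 * h3 + l₁p.2 * h4) -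
    (l₂m.1 * r₁p.1 + l₂m.2 * r₁p.2) * c * hp12 +
    (l₂m.1 * r₁p.1 + l₂m.2 * r₁p.2) * b * hp11
end
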